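/- Let k be a commutative ring, m ≥ 1, and T(M) = (M^{⊗m})_{C_m} as above with the rotation isomorphisms τ. Then for every pair (M, N) of k-modules, τ_{M,N} ∘ τ_{N,M} = id on T(N ⊗ M). -/

import Mathlib

open scoped TensorProduct

variable (k : Type*) [CommRing k]

/-- The submodule of the `m`-fold tensor power generated by `y - σy`, where `σ` is the cyclic
permutation of tensor factors; the quotient by it is the `C_m`-coinvariants. -/
noncomputable def coinvSub (A : Type*) [AddCommGroup A] [Module k A] (m : ℕ) :
    Submodule k (⨂[k] _i : Fin m, A) :=
  Submodule.span k
    {x | ∃ y, x = y - (PiTensorProduct.reindex k (fun _ : Fin m => A) (finRotate m)) y}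

/-- `T(A) = (A^{⊗m})_{C_m}`, the coinvariants of the cyclic action on the tensor power. -/
noncomputable abbrev Tcoinv (A : Type*) [AddCommGroup A] [Module k A] (m : ℕ) :=
  (⨂[k] _i : Fin m, A) ⧸ coinvSub k A m

/-!
The map `⊗ᵢ (aᵢ ⊗ bᵢ) ↦ ⊗ᵢ (bᵢ ⊗ aᵢ₊₁)` is defined on the whole tensor power by splitting
`⨂ᵢ (A ⊗ B)` as `(⨂ᵢ A) ⊗ (⨂ᵢ B)`, rotating the `A`-factor and recombining. It commutes with the
cyclic rotation, hence descends to coinvariants, and applied twice it rotates every factor by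
one step, which is the identity on coinvariants.
-/

namespace PiTensorProduct

variable (A B : Type*) [AddCommGroup A] [Module k A] [AddCommGroup B] [Module k B]

noncomputable def tprodSuccEquiv (n : ℕ) :
    (⨂[k] _ : Fin (n + 1), A) ≃ₗ[k] (⨂[k] _ : Fin n, A) ⊗[k] A :=
  (reindex k (fun _ => A) finSumFinEquiv.symm).trans <|
    (tmulEquiv k A).symm.trans (LinearEquiv.lTensor _ (subsingletonEquiv 0))

theorem tprodSuccEquiv_tprod (n : ℕ) (x : Fin (n + 1) → A) :
    tprodSuccEquiv k A n (tprod k x) = tprod k (fun i => x i.castSucc) ⊗ₜ x (Fin.last n) := by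
  simp only [tprodSuccEquiv, LinearEquiv.trans_apply, reindex_tprod, Equiv.symm_symm,
    tmulEquiv_symm_apply, finSumFinEquiv_apply_left, finSumFinEquiv_apply_right,
    LinearEquiv.lTensor_tmul, subsingletonEquiv_apply_tprod]
  rfl

theorem tprodSuccEquiv_symm_tmul (n : ℕ) (x : Fin (n + 1) → A) :
    (tprodSuccEquiv k A n).symm (tprod k (fun i => x i.castSucc) ⊗ₜ x (Fin.last n)) =
      tprod k x := by
  rw [LinearEquiv.symm_apply_eq, tprodSuccEquiv_tprod]

noncomputable def tprodTmulSplit : ∀ n : ℕ,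
    (⨂[k] _ : Fin n, A ⊗[k] B) →ₗ[k] (⨂[k] _ : Fin n, A) ⊗[k] (⨂[k] _ : Fin n, B)
  | 0 => (TensorProduct.congr (isEmptyEquiv _).symm (isEmptyEquiv _).symm).toLinearMap ∘ₗ
      (TensorProduct.lid k k).symm.toLinearMap ∘ₗ (isEmptyEquiv _).toLinearMap
  | n + 1 => TensorProduct.map (tprodSuccEquiv k A n).symm.toLinearMap
        (tprodSuccEquiv k B n).symm.toLinearMap ∘ₗ
      (TensorProduct.tensorTensorTensorComm k _ _ A B).toLinearMap ∘ₗ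
      (tprodTmulSplit n).rTensor (A ⊗[k] B) ∘ₗ (tprodSuccEquiv k (A ⊗[k] B) n).toLinearMap

theorem tprodTmulSplit_tprod : ∀ (n : ℕ) (a : Fin n → A) (b : Fin n → B),
    tprodTmulSplit k A B n (tprod k fun i => a i ⊗ₜ b i) = tprod k a ⊗ₜ tprod k b
  | 0, a, b => by
    rw [Subsingleton.elim a isEmptyElim, Subsingleton.elim b isEmptyElim]
    simp [tprodTmulSplit]
  | n + 1, a, b => by
    simp [tprodTmulSplit, tprodSuccEquiv_tprod, tprodTmulSplit_tprod n, tprodSuccEquiv_symm_tmul]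

variable {k} in
theorem ext_tprod_tmul {ι : Type*} [Finite ι] {A B E : Type*} [AddCommGroup A] [Module k A]
    [AddCommGroup B] [Module k B] [AddCommGroup E] [Module k E]
    {φ ψ : (⨂[k] _ : ι, A ⊗[k] B) →ₗ[k] E}
    (h : ∀ (a : ι → A) (b : ι → B),
      φ (⨂ₜ[k] i, a i ⊗ₜ b i) = ψ (⨂ₜ[k] i, a i ⊗ₜ b i)) : φ = ψ :=
  ext_of_span_eq_top (g := fun _ (p : A × B) => p.1 ⊗ₜ[k] p.2)
    (fun _ => by simpa [Set.range] using TensorProduct.span_tmul_eq_top k A B)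
    fun j => h (fun i => (j i).1) (fun i => (j i).2)

end PiTensorProduct

section

open PiTensorProduct

variable (A B : Type*) [AddCommGroup A] [Module k A] [AddCommGroup B] [Module k B]

noncomputable def rotSwap (m : ℕ) : (⨂[k] _ : Fin m, A ⊗[k] B) →ₗ[k] ⨂[k] _ : Fin m, B ⊗[k] A :=
  TensorProduct.lift ((map₂ fun _ => TensorProduct.mk k B A).flip ∘ₗ
    (reindex k (fun _ => A) (finRotate m).symm).toLinearMap) ∘ₗ tprodTmulSplit k A B m

theorem rotSwap_tprod (m : ℕ) (a : Fin m → A) (b : Fin m → B) :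
    rotSwap k A B m (⨂ₜ[k] i, a i ⊗ₜ b i) = ⨂ₜ[k] i, b i ⊗ₜ a (finRotate m i) := by
  simp only [rotSwap, LinearMap.comp_apply, tprodTmulSplit_tprod, TensorProduct.lift.tmul,
    LinearMap.flip_apply, LinearEquiv.coe_coe, reindex_tprod, Equiv.symm_symm, map₂_tprod_tprod,
    TensorProduct.mk_apply]

theorem rotSwap_comp_reindex (m : ℕ) :
    rotSwap k A B m ∘ₗ (reindex k (fun _ => A ⊗[k] B) (finRotate m)).toLinearMap =
      (reindex k (fun _ => B ⊗[k] A) (finRotate m)).toLinearMap ∘ₗ rotSwap k A B m :=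
  ext_tprod_tmul fun a b => by
    simp only [LinearMap.comp_apply, LinearEquiv.coe_coe, reindex_tprod, rotSwap_tprod,
      Equiv.symm_apply_apply, Equiv.apply_symm_apply]

theorem rotSwap_comp_rotSwap (m : ℕ) :
    rotSwap k B A m ∘ₗ rotSwap k A B m =
      (reindex k (fun _ => A ⊗[k] B) (finRotate m)).symm.toLinearMap :=
  ext_tprod_tmul fun a b => by
    simp only [LinearMap.comp_apply, LinearEquiv.coe_coe, rotSwap_tprod, reindex_symm,
      reindex_tprod, Equiv.symm_symm]

theorem mk_reindex_finRotate (m : ℕ) (y : ⨂[k] _ : Fin m, A) :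
    (Submodule.Quotient.mk (reindex k (fun _ => A) (finRotate m) y) : Tcoinv k A m) =
      Submodule.Quotient.mk y :=
  (Submodule.Quotient.eq _).2 <| by
    rw [← neg_sub]
    exact neg_mem (Submodule.subset_span ⟨y, rfl⟩)

theorem mk_reindex_finRotate_symm (m : ℕ) (y : ⨂[k] _ : Fin m, A) :
    (Submodule.Quotient.mk ((reindex k (fun _ => A) (finRotate m)).symm y) : Tcoinv k A m) =
      Submodule.Quotient.mk y := by
  rw [← mk_reindex_finRotate, LinearEquiv.apply_symm_apply]

theorem coinvSub_le_comap {m : ℕ} {f : (⨂[k] _ : Fin m, A) →ₗ[k] ⨂[k] _ : Fin m, B}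
    (hf : f ∘ₗ (reindex k (fun _ => A) (finRotate m)).toLinearMap =
      (reindex k (fun _ => B) (finRotate m)).toLinearMap ∘ₗ f) :
    coinvSub k A m ≤ (coinvSub k B m).comap f := by
  rw [coinvSub, Submodule.span_le]
  rintro _ ⟨y, rfl⟩
  have hfy := LinearMap.congr_fun hf y
  simp only [LinearMap.comp_apply, LinearEquiv.coe_coe] at hfy
  rw [SetLike.mem_coe, Submodule.mem_comap, map_sub, hfy]
  exact Submodule.subset_span ⟨f y, rfl⟩

noncomputable def rotSwapCoinv (m : ℕ) : Tcoinv k (A ⊗[k] B) m →ₗ[k] Tcoinv k (B ⊗[k] A) m :=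
  (coinvSub k _ m).mapQ (coinvSub k _ m) (rotSwap k A B m)
    (coinvSub_le_comap k _ _ (rotSwap_comp_reindex k A B m))

theorem rotSwapCoinv_mk (m : ℕ) (y : ⨂[k] _ : Fin m, A ⊗[k] B) :
    rotSwapCoinv k A B m (Submodule.Quotient.mk y) = Submodule.Quotient.mk (rotSwap k A B m y) :=
  rfl

theorem rotSwapCoinv_comp_rotSwapCoinv (m : ℕ) :
    rotSwapCoinv k B A m ∘ₗ rotSwapCoinv k A B m = LinearMap.id :=
  Submodule.linearMap_qext _ <| LinearMap.ext fun y => by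
    simp only [LinearMap.comp_apply, Submodule.mkQ_apply, rotSwapCoinv_mk, LinearMap.id_apply]
    rw [← LinearMap.comp_apply (rotSwap k B A m), rotSwap_comp_rotSwap]
    exact mk_reindex_finRotate_symm k _ m y

end

theorem rotation_coinv_involutive (M N : Type*)
    [AddCommGroup M] [Module k M] [AddCommGroup N] [Module k N] (m : ℕ) :
    ∃ (τMN : Tcoinv k (M ⊗[k] N) m →ₗ[k] Tcoinv k (N ⊗[k] M) m)
      (τNM : Tcoinv k (N ⊗[k] M) m →ₗ[k] Tcoinv k (M ⊗[k] N) m),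
      (∀ (a : Fin m → M) (b : Fin m → N),
        τMN (Submodule.Quotient.mk (⨂ₜ[k] i, (a i ⊗ₜ[k] b i)))
          = Submodule.Quotient.mk (⨂ₜ[k] i, (b i ⊗ₜ[k] a (finRotate m i)))) ∧
      (∀ (b : Fin m → N) (a : Fin m → M),
        τNM (Submodule.Quotient.mk (⨂ₜ[k] i, (b i ⊗ₜ[k] a i)))
          = Submodule.Quotient.mk (⨂ₜ[k] i, (a i ⊗ₜ[k] b (finRotate m i)))) ∧
      τMN.comp τNM = LinearMap.id :=
  ⟨rotSwapCoinv k M N m, rotSwapCoinv k N M m,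
    fun a b => by rw [rotSwapCoinv_mk, rotSwap_tprod],
    fun b a => by rw [rotSwapCoinv_mk, rotSwap_tprod],
    rotSwapCoinv_comp_rotSwapCoinv k N M m⟩
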